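/- arXiv:2209.06079 — 4 statements merged into one kernel-verified Lean document; each statement's English description precedes it below -/
import Mathlib

section
/- For any real numbers M > 0 and α > β > 0, the sum over k ∈ ℕ (k ≥ 1) of ln(1 + (M·k^{-1/β})^α) is bounded by C(α,β)·M^β, where C(α,β) depends only on α and β. -/
/-!
Put `x = M ^ β` and `γ = α / β > 1`; the `k`-th term is `log (1 + (x / (k + 1)) ^ γ)`.
For `k + 1 ≤ x` use `log (1 + y) ≤ log 2 + log y` together with
`∑_{n ≤ N} log (x / n) = N log x - log N! ≤ x`, which follows from `N! ≥ N ^ N / e ^ N` and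
`log t ≤ t - 1`. For `k + 1 > x` use `log (1 + y) ≤ y`; comparing `∑_{n > x} n ^ (-γ)` with
`∫ t ^ (-γ)` bounds this tail by a multiple of `x ^ (1 - γ)`.
-/

open Finset
open scoped Nat

namespace Real

lemma mul_rpow_neg_one_div_rpow {M t α β : ℝ} (hM : 0 ≤ M) (ht : 0 ≤ t) (hβ : β ≠ 0) :
    (M * t ^ (-(1 / β))) ^ α = (M ^ β / t) ^ (α / β) := by
  rw [mul_rpow hM (rpow_nonneg ht _), ← rpow_mul ht, div_rpow (rpow_nonneg hM _) ht,
    ← rpow_mul hM, mul_div_cancel₀ α hβ, show -(1 / β) * α = -(α / β) by ring, rpow_neg ht]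
  exact (div_eq_mul_inv _ _).symm

lemma log_one_add_le_log_two_add_log {y : ℝ} (hy : 1 ≤ y) :
    log (1 + y) ≤ log 2 + log y := by
  rw [← log_mul two_ne_zero (by positivity)]
  exact log_le_log (by positivity) (by linarith)

lemma sum_range_log_div_succ_le {x : ℝ} (hx : 0 < x) (N : ℕ) :
    ∑ k ∈ range N, log (x / (k + 1)) ≤ x := by
  rcases N.eq_zero_or_pos with rfl | hN
  · simpa using hx.le
  have hN' : (0 : ℝ) < N := by exact_mod_cast hN
  have hsum : ∑ k ∈ range N, log (x / (k + 1)) = N * log x - log N ! := by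
    rw [← prod_range_add_one_eq_factorial, Nat.cast_prod, log_prod fun k _ => by positivity,
      sum_congr rfl fun (k : ℕ) _ => log_div hx.ne' (by positivity : ((k : ℝ) + 1) ≠ 0),
      sum_sub_distrib, sum_const, card_range, nsmul_eq_mul]
    push_cast
    rfl
  have hfact : N * log N - N ≤ log N ! := by
    have := log_le_log (by positivity) (pow_div_factorial_le_exp (N : ℝ) hN'.le N)
    rw [log_exp, log_div (by positivity) (by positivity), log_pow] at this
    linarith
  have hlog : log (x / N) ≤ x / N - 1 := log_le_sub_one_of_pos (by positivity)
  rw [log_div hx.ne' hN'.ne'] at hlog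
  calc ∑ k ∈ range N, log (x / (k + 1)) ≤ N * ((log x - log N) + 1) := by linarith
    _ ≤ N * (x / N) := by gcongr; linarith
    _ = x := mul_div_cancel₀ x hN'.ne'

lemma sum_range_add_rpow_neg_le {γ a : ℝ} (hγ : 1 < γ) (ha : 0 < a) (K : ℕ) :
    ∑ i ∈ range K, (a + ↑(i + 1)) ^ (-γ) ≤ a ^ (1 - γ) / (γ - 1) := by
  have hanti : AntitoneOn (fun t : ℝ => t ^ (-γ)) (Set.Icc a (a + K)) := fun s hs t _ hst =>
    rpow_le_rpow_of_nonpos (ha.trans_le hs.1) hst (by linarith)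
  refine (hanti.sum_le_integral).trans ?_
  have h0 : (0 : ℝ) ∉ Set.uIcc a (a + K) := by
    rw [Set.uIcc_of_le (by linarith [K.cast_nonneg (α := ℝ)])]
    exact fun h => ha.not_ge h.1
  rw [integral_rpow (Or.inr ⟨by linarith, h0⟩), show -γ + 1 = -(γ - 1) by ring, div_neg,
    ← neg_div, neg_sub, show -(γ - 1) = 1 - γ by ring]
  have : 0 ≤ (a + K) ^ (1 - γ) := by positivity
  gcongr
  linarith

lemma sum_range_add_rpow_neg_le_of_one_le {γ a : ℝ} (hγ : 1 < γ) (ha : 1 ≤ a) (K : ℕ) :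
    ∑ k ∈ range K, (a + k) ^ (-γ) ≤ γ / (γ - 1) * a ^ (1 - γ) := by
  have hγ' : 0 < γ - 1 := by linarith
  cases K with
  | zero => simp only [range_zero, sum_empty]; positivity
  | succ K =>
    rw [sum_range_succ', Nat.cast_zero, add_zero]
    have hfirst : a ^ (-γ) ≤ a ^ (1 - γ) := rpow_le_rpow_of_exponent_le ha (by linarith)
    calc _ ≤ a ^ (1 - γ) / (γ - 1) + a ^ (1 - γ) :=
          add_le_add (sum_range_add_rpow_neg_le hγ (by linarith) K) hfirst
      _ = γ / (γ - 1) * a ^ (1 - γ) := by field_simp; ring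

section

variable {γ x : ℝ}

lemma sum_range_log_one_add_div_rpow_le (hγ : 0 ≤ γ) (hx : 0 < x) {N : ℕ} (hN : N ≤ x) :
    ∑ k ∈ range N, log (1 + (x / (k + 1)) ^ γ) ≤ (log 2 + γ) * x := by
  have hterm : ∀ k ∈ range N,
      log (1 + (x / (k + 1)) ^ γ) ≤ log 2 + γ * log (x / (k + 1)) := by
    intro k hk
    have hk : (k : ℝ) + 1 ≤ x := by
      have : k + 1 ≤ N := mem_range.1 hk
      exact le_trans (by exact_mod_cast this) hN
    have hx1 : 1 ≤ x / (k + 1) := (one_le_div (by positivity)).2 hk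
    rw [← log_rpow (by linarith)]
    exact log_one_add_le_log_two_add_log (one_le_rpow hx1 hγ)
  calc _ ≤ ∑ k ∈ range N, (log 2 + γ * log (x / (k + 1))) := sum_le_sum hterm
    _ = N * log 2 + γ * ∑ k ∈ range N, log (x / (k + 1)) := by
      rw [sum_add_distrib, sum_const, card_range, nsmul_eq_mul, mul_sum]
    _ ≤ x * log 2 + γ * x := by
      gcongr
      exact sum_range_log_div_succ_le hx N
    _ = (log 2 + γ) * x := by ring

lemma sum_range_log_one_add_div_nat_add_rpow_le (hγ : 1 < γ) (hx : 0 < x) {N : ℕ}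
    (hN : x < N + 1) (K : ℕ) :
    ∑ k ∈ range K, log (1 + (x / (N + k + 1)) ^ γ) ≤ γ / (γ - 1) * x := by
  have hterm : ∀ k ∈ range K,
      log (1 + (x / (N + k + 1)) ^ γ) ≤ x ^ γ * ((N + 1 : ℝ) + k) ^ (-γ) := by
    intro k _
    have hpos : (0 : ℝ) < N + k + 1 := by positivity
    refine (log_le_sub_one_of_pos (by positivity)).trans_eq ?_
    rw [add_sub_cancel_left, div_rpow hx.le hpos.le, show (N + 1 : ℝ) + k = N + k + 1 by ring,
      rpow_neg hpos.le, div_eq_mul_inv]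
  have hN1 : (1 : ℝ) ≤ N + 1 := by linarith [N.cast_nonneg (α := ℝ)]
  calc _ ≤ ∑ k ∈ range K, x ^ γ * ((N + 1 : ℝ) + k) ^ (-γ) := sum_le_sum hterm
    _ = x ^ γ * ∑ k ∈ range K, ((N + 1 : ℝ) + k) ^ (-γ) := (mul_sum ..).symm
    _ ≤ x ^ γ * (γ / (γ - 1) * (N + 1 : ℝ) ^ (1 - γ)) := by
      gcongr
      exact sum_range_add_rpow_neg_le_of_one_le hγ hN1 K
    _ ≤ x ^ γ * (γ / (γ - 1) * x ^ (1 - γ)) := by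
      gcongr x ^ γ * (_ * ?_)
      exact rpow_le_rpow_of_nonpos hx hN.le (by linarith)
    _ = γ / (γ - 1) * x := by
      rw [mul_left_comm, ← rpow_add hx, add_sub_cancel, rpow_one, mul_comm]

theorem tsum_log_one_add_div_rpow_le (hγ : 1 < γ) (hx : 0 < x) :
    ∑' k : ℕ, log (1 + (x / (k + 1)) ^ γ) ≤ (log 2 + γ + γ / (γ - 1)) * x := by
  set f : ℕ → ℝ := fun k => log (1 + (x / (k + 1)) ^ γ)
  have hf : ∀ k, 0 ≤ f k := fun k =>
    log_nonneg (le_add_of_nonneg_right (by positivity))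
  refine tsum_le_of_sum_range_le hf fun K => ?_
  set N := ⌊x⌋₊
  calc ∑ k ∈ range K, f k ≤ ∑ k ∈ range (N + K), f k :=
        sum_le_sum_of_subset_of_nonneg (range_mono (by omega)) fun k _ _ => hf k
    _ = ∑ k ∈ range N, f k + ∑ k ∈ range K, f (N + k) := sum_range_add ..
    _ ≤ (log 2 + γ) * x + γ / (γ - 1) * x := by
      refine add_le_add
        (sum_range_log_one_add_div_rpow_le (by linarith) hx (Nat.floor_le hx.le)) ?_
      simpa only [f, Nat.cast_add, add_assoc] using
        sum_range_log_one_add_div_nat_add_rpow_le hγ hx (Nat.lt_floor_add_one x) K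
    _ = (log 2 + γ + γ / (γ - 1)) * x := by ring

end

end Real

open Real

/-- for α > β > 0 there is C = C(α,β) with
∑_{k≥1} ln(1 + (M k^{-1/β})^α) ≤ C·M^β for all M > 0. -/
theorem stmt_2 (α β : ℝ) (hβ : 0 < β) (hαβ : β < α) :
    ∃ C : ℝ, 0 < C ∧ ∀ M : ℝ, 0 < M →
      (∑' k : ℕ, Real.log (1 + (M * ((k : ℝ) + 1) ^ (-(1 / β))) ^ α)) ≤ C * M ^ β := by
  set γ := α / β
  have hγ : 1 < γ := (one_lt_div hβ).2 hαβ
  have hγ' : 0 < γ - 1 := by linarith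
  refine ⟨log 2 + γ + γ / (γ - 1), by positivity, fun M hM => ?_⟩
  have hterm (k : ℕ) : (M * ((k : ℝ) + 1) ^ (-(1 / β))) ^ α = (M ^ β / (k + 1)) ^ γ :=
    mul_rpow_neg_one_div_rpow hM.le (by positivity) hβ.ne'
  simp_rw [hterm]
  exact tsum_log_one_add_div_rpow_le hγ (rpow_pos_of_pos hM β)
end

section
/- Let (μ_k)_{k≥1} be a nonincreasing sequence of nonnegative reals satisfying μ_k ≤ Y·exp(-c·ε·k^{1/(d-1)}) for all k, where Y ≥ 0, c > 0, ε ∈ (0,1], and d ≥ 2 an integer. Then ∑_{k=1}^∞ ln(1+μ_k) ≤ C·ε^{1-d}·(ln(2+Y))^d, where C depends only on c and d. -/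
/-!
Since `μ k ≤ Y`, every term is at most `L = log (2 + Y)`. Once `(k + 1) ^ (1 / (d - 1))` exceeds
`2 L / (c ε)`, the prefactor `Y ≤ exp L` costs at most half of the exponent, so with
`log (1 + x) ≤ x` the tail is dominated by `∑ exp (-(c ε / 2) (k + 1) ^ (1 / (d - 1)))`, and
comparison with `∫₀^∞ exp (-a x ^ (1 / q)) dx = Γ(q + 1) / a ^ q` bounds it by
`Γ(d) (2 / (c ε)) ^ (d - 1)`. The first `K ≈ (2 L / (c ε)) ^ (d - 1)` terms contribute at most
`K L`. Both pieces are `O(ε ^ (1 - d) L ^ d)` because `ε ≤ 1` and `L ≥ log 2`.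
-/

open Real MeasureTheory Set

lemma tsum_le_mul_add_of_le_of_tail_le {f g : ℕ → ℝ} {K : ℕ} {L B : ℝ}
    (hf0 : ∀ k, 0 ≤ f k) (hfL : ∀ k, f k ≤ L) (hfg : ∀ k, K ≤ k → f k ≤ g k)
    (hg0 : ∀ k, 0 ≤ g k) (hgB : ∀ N, ∑ k ∈ Finset.range N, g k ≤ B) :
    ∑' k, f k ≤ K * L + B := by
  have hL : 0 ≤ L := (hf0 0).trans (hfL 0)
  have hsplit : ∀ k, f k ≤ (if k < K then L else 0) + g k := by
    intro k
    split_ifs with hk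
    · linarith [hfL k, hg0 k]
    · simpa using hfg k (not_lt.1 hk)
  refine Real.tsum_le_of_sum_range_le hf0 fun N => ?_
  have hhead : ∑ k ∈ Finset.range N, (if k < K then L else 0) ≤ K * L := by
    rw [← Finset.sum_filter]
    calc ∑ k ∈ Finset.range N with k < K, L ≤ ∑ _k ∈ Finset.range K, L :=
          Finset.sum_le_sum_of_subset_of_nonneg (fun k hk => by simp_all) (fun _ _ _ => hL)
      _ = K * L := by simp
  calc ∑ k ∈ Finset.range N, f k
      ≤ ∑ k ∈ Finset.range N, ((if k < K then L else 0) + g k) :=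
        Finset.sum_le_sum fun k _ => hsplit k
    _ ≤ K * L + B := by rw [Finset.sum_add_distrib]; exact add_le_add hhead (hgB N)

lemma sum_range_exp_neg_mul_rpow_le {q a : ℝ} (hq : 0 < q) (ha : 0 < a) (N : ℕ) :
    ∑ k ∈ Finset.range N, exp (-(a * ((k : ℝ) + 1) ^ (1 / q))) ≤ Gamma (q + 1) / a ^ q := by
  set f : ℝ → ℝ := fun x => exp (-a * x ^ (1 / q))
  have hval : ∫ x in Ioi 0, f x = Gamma (q + 1) / a ^ q := by
    rw [integral_exp_neg_mul_rpow (by positivity) ha, one_div_one_div,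
      show -1 / (1 / q) = -q by field_simp, rpow_neg ha.le, inv_mul_eq_div]
  -- a non-integrable function would have integral `0`
  have hint : IntegrableOn f (Ioi 0) := .of_integral_ne_zero (by rw [hval]; positivity)
  have hanti : AntitoneOn f (Icc ((0 : ℕ) : ℝ) N) := fun x hx y _ hxy => by
    simp only [f, neg_mul, exp_le_exp, neg_le_neg_iff]
    gcongr
    exact_mod_cast hx.1
  calc ∑ k ∈ Finset.range N, exp (-(a * ((k : ℝ) + 1) ^ (1 / q)))
      = ∑ k ∈ Finset.Ico 0 N, f ((k + 1 : ℕ) : ℝ) := by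
        rw [← Finset.range_eq_Ico]
        push_cast [f, neg_mul]
        rfl
    _ ≤ ∫ x in (0 : ℝ)..N, f x := by exact_mod_cast hanti.sum_le_integral_Ico N.zero_le
    _ = ∫ x in Ioc 0 (N : ℝ), f x := intervalIntegral.integral_of_le N.cast_nonneg
    _ ≤ ∫ x in Ioi 0, f x :=
      setIntegral_mono_set hint (ae_of_all _ fun _ => (exp_pos _).le)
        Ioc_subset_Ioi_self.eventuallyLE
    _ = Gamma (q + 1) / a ^ q := hval

lemma le_rpow_one_div_of_natCeil_rpow_le {x q : ℝ} {k : ℕ} (hx : 0 ≤ x) (hq : 0 < q)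
    (hk : ⌈x ^ q⌉₊ ≤ k) : x ≤ ((k : ℝ) + 1) ^ (1 / q) := by
  rw [one_div, le_rpow_inv_iff_of_pos hx (by positivity) hq]
  calc x ^ q ≤ ⌈x ^ q⌉₊ := Nat.le_ceil _
    _ ≤ k := by exact_mod_cast hk
    _ ≤ k + 1 := by linarith

lemma tsum_log_one_add_le_of_le_mul_exp_neg_rpow {q b Y : ℝ} {μ : ℕ → ℝ} (hq : 0 < q)
    (hb : 0 < b) (hY : 0 ≤ Y) (hμ0 : ∀ k, 0 ≤ μ k)
    (hμ : ∀ k : ℕ, μ k ≤ Y * exp (-(b * ((k : ℝ) + 1) ^ (1 / q)))) :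
    ∑' k, log (1 + μ k) ≤
      ((2 * log (2 + Y) / b) ^ q + 1) * log (2 + Y) + Gamma (q + 1) / (b / 2) ^ q := by
  set L := log (2 + Y)
  have hL : 0 < L := log_pos (by linarith)
  have hμY : ∀ k, μ k ≤ Y := fun k =>
    (hμ k).trans (mul_le_of_le_one_right hY (exp_le_one_iff.2 (neg_nonpos.2 (by positivity))))
  have hhead : ∀ k, log (1 + μ k) ≤ L := fun k =>
    log_le_log (by linarith [hμ0 k]) (by linarith [hμY k])
  have htail : ∀ k, ⌈(2 * L / b) ^ q⌉₊ ≤ k →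
      log (1 + μ k) ≤ exp (-(b / 2 * ((k : ℝ) + 1) ^ (1 / q))) := by
    intro k hk
    set s := ((k : ℝ) + 1) ^ (1 / q)
    have hs : 2 * L ≤ b * s := by
      rw [← div_le_iff₀' hb]
      exact le_rpow_one_div_of_natCeil_rpow_le (by positivity) hq hk
    calc log (1 + μ k) ≤ μ k := by
          linarith [log_le_sub_one_of_pos (by linarith [hμ0 k] : 0 < 1 + μ k)]
      _ ≤ Y * exp (-(b * s)) := hμ k
      _ ≤ exp L * exp (-(b * s)) := by
        gcongr
        rw [exp_log (by linarith)]
        linarith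
      _ ≤ exp (-(b / 2 * s)) := by
        rw [← exp_add, exp_le_exp]
        linarith
  calc ∑' k, log (1 + μ k) ≤ ⌈(2 * L / b) ^ q⌉₊ * L + Gamma (q + 1) / (b / 2) ^ q :=
        tsum_le_mul_add_of_le_of_tail_le (fun k => log_nonneg (by linarith [hμ0 k])) hhead htail
          (fun _ => (exp_pos _).le) (sum_range_exp_neg_mul_rpow_le hq (by positivity))
    _ ≤ ((2 * L / b) ^ q + 1) * L + Gamma (q + 1) / (b / 2) ^ q := by
        gcongr
        exact (Nat.ceil_lt_add_one (by positivity)).le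

lemma exists_const_split_bound_le {q c : ℝ} (hq : 0 < q) (hc : 0 < c) :
    ∃ C > 0, ∀ ε L : ℝ, 0 < ε → ε ≤ 1 → log 2 ≤ L →
      ((2 * L / (c * ε)) ^ q + 1) * L + Gamma (q + 1) / (c * ε / 2) ^ q ≤
        C * ε ^ (-q) * L ^ (q + 1) := by
  set A := (c / 2) ^ q
  set Λ := log 2 ^ q
  set Γ := Gamma (q + 1)
  have hlog2 : 0 < log 2 := log_pos one_lt_two
  have hA : 0 < A := by positivity
  have hΛ : 0 < Λ := by positivity
  have hΓ : 0 < Γ := Gamma_pos_of_pos (by linarith)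
  refine ⟨A⁻¹ + Λ⁻¹ + Γ / (A * Λ * log 2), by positivity, fun ε L hε hε1 hL => ?_⟩
  have hL0 : 0 < L := hlog2.trans_le hL
  set E := ε ^ q
  set P := L ^ q
  have hE : 0 < E := by positivity
  have hE1 : E ≤ 1 := rpow_le_one hε.le hε1 hq.le
  have hP : Λ ≤ P := rpow_le_rpow hlog2.le hL hq.le
  have hratio : (2 * L / (c * ε)) ^ q = P / (A * E) := by
    rw [show 2 * L / (c * ε) = L / (c / 2 * ε) by field_simp, div_rpow hL0.le (by positivity),
      mul_rpow (by positivity) hε.le]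
  have hscale : (c * ε / 2) ^ q = A * E := by
    rw [show c * ε / 2 = c / 2 * ε by ring, mul_rpow (by positivity) hε.le]
  have hhead : L ≤ P * L / (Λ * E) := by
    rw [le_div_iff₀ (by positivity)]
    have : Λ * E ≤ P := by nlinarith
    nlinarith
  have htail : Γ / (A * E) ≤ Γ * (P * L) / (A * Λ * log 2 * E) := by
    have hPL : Λ * log 2 ≤ P * L := mul_le_mul hP hL hlog2.le (by positivity)
    calc Γ / (A * E) = Γ * (Λ * log 2) / (A * Λ * log 2 * E) := by field_simp
      _ ≤ Γ * (P * L) / (A * Λ * log 2 * E) := by gcongr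
  rw [hratio, hscale, rpow_neg hε.le, rpow_add_one hL0.ne']
  calc (P / (A * E) + 1) * L + Γ / (A * E) = P * L / (A * E) + L + Γ / (A * E) := by ring
    _ ≤ P * L / (A * E) + P * L / (Λ * E) + Γ * (P * L) / (A * Λ * log 2 * E) := by gcongr
    _ = (A⁻¹ + Λ⁻¹ + Γ / (A * Λ * log 2)) * E⁻¹ * (P * L) := by field_simp

/-- if (μ_k) is nonincreasing, nonnegative and
μ_k ≤ Y exp(-cε k^{1/(d-1)}), then ∑ ln(1+μ_k) ≤ C ε^{1-d} (ln(2+Y))^d,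
with C depending only on c and d. -/
theorem stmt_6 (d : ℕ) (hd : 2 ≤ d) (c : ℝ) (hc : 0 < c) :
    ∃ C : ℝ, 0 < C ∧ ∀ ε : ℝ, 0 < ε → ε ≤ 1 → ∀ Y : ℝ, 0 ≤ Y →
      ∀ μ : ℕ → ℝ, Antitone μ → (∀ k, 0 ≤ μ k) →
      (∀ k : ℕ, μ k ≤ Y * Real.exp (-(c * ε * ((k : ℝ) + 1) ^ ((1 : ℝ) / (d - 1))))) →
      (∑' k : ℕ, Real.log (1 + μ k)) ≤ C * ε ^ ((1 : ℝ) - d) * (Real.log (2 + Y)) ^ d := by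
  have hq : (0 : ℝ) < d - 1 := by
    have : (2 : ℝ) ≤ d := by exact_mod_cast hd
    linarith
  obtain ⟨C, hC, hbound⟩ := exists_const_split_bound_le hq hc
  refine ⟨C, hC, fun ε hε hε1 Y hY μ _ hμ0 hμ => ?_⟩
  have hL : log 2 ≤ log (2 + Y) := log_le_log two_pos (by linarith)
  calc ∑' k, log (1 + μ k)
      ≤ ((2 * log (2 + Y) / (c * ε)) ^ ((d : ℝ) - 1) + 1) * log (2 + Y)
          + Gamma ((d : ℝ) - 1 + 1) / (c * ε / 2) ^ ((d : ℝ) - 1) :=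
        tsum_log_one_add_le_of_le_mul_exp_neg_rpow hq (by positivity) hY hμ0 hμ
    _ ≤ C * ε ^ (-((d : ℝ) - 1)) * log (2 + Y) ^ ((d : ℝ) - 1 + 1) := hbound ε _ hε hε1 hL
    _ = C * ε ^ ((1 : ℝ) - d) * log (2 + Y) ^ d := by rw [neg_sub, sub_add_cancel, rpow_natCast]
end

section
/- Let f be holomorphic on a neighborhood of the closed disk of radius R > 0 centered at 0 in ℂ, with f(0) = 1. Define N_f(R) = ∫_0^R n_f(t)/t dt where n_f(t) is the number of zeros of f (with multiplicity) in the open disk of radius t. Then N_f(R) ≤ max_{|λ|=R} ln|f(λ)|. -/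
open Classical in
/-- Multiplicity of a zero of f at z (the order of vanishing of f at z). -/
noncomputable def zeroMult (f : ℂ → ℂ) (z : ℂ) : ℕ :=
  if h : AnalyticAt ℂ f z then (analyticOrderAt f z).toNat else 0

/-- n_f(t): the number of zeros of f (with multiplicity) in the open disk of radius t. -/
noncomputable def zeroCount (f : ℂ → ℂ) (t : ℝ) : ℝ :=
  ∑' z : {z : ℂ // z ∈ Metric.ball (0 : ℂ) t ∧ f z = 0}, (zeroMult f z : ℝ)

/-- N_f(R) = ∫_0^R n_f(t)/t dt. -/
noncomputable def regZeroCount (f : ℂ → ℂ) (R : ℝ) : ℝ :=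
  ∫ t in (0 : ℝ)..R, zeroCount f t / t

/-!
Jensen's formula gives
`circleAverage (log ‖f ·‖) 0 R = ∑ ord_u(f) · log (R / ‖u‖) + log ‖f 0‖`,
the sum running over the zeros `u` of `f` in the closed disk. Since each zero `u` is counted by
`n_f(t)` exactly for `t > ‖u‖`, its contribution to `N_f(R)` is
`ord_u(f) · ∫_{‖u‖}^R dt / t`, so `N_f(R)` is that same sum. The circle average is at most the
maximum of `log ‖f‖` on the circle.
-/

open Metric Set MeasureTheory Real MeromorphicOn

lemma zeroMult_eq_analyticOrderNatAt (f : ℂ → ℂ) (z : ℂ) :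
    zeroMult f z = analyticOrderNatAt f z := by
  by_cases hf : AnalyticAt ℂ f z
  · simp [zeroMult, hf, analyticOrderNatAt]
  · simp [zeroMult, hf, analyticOrderNatAt_of_not_analyticAt]

lemma AnalyticOnNhd.divisor_eq_analyticOrderNatAt {f : ℂ → ℂ} {U : Set ℂ} {z : ℂ}
    (hf : AnalyticOnNhd ℂ f U) (hz : z ∈ U) :
    divisor f U z = analyticOrderNatAt f z := by
  rw [hf.divisor_apply hz, analyticOrderNatAt]
  cases analyticOrderAt f z <;> simp

lemma zeroMult_eq_zero_of_ne_zero {f : ℂ → ℂ} {z : ℂ} (h : f z ≠ 0) :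
    zeroMult f z = 0 := by
  simp [zeroMult_eq_analyticOrderNatAt, analyticOrderNatAt, analyticOrderAt_eq_zero.2 (Or.inr h)]

lemma zeroCount_eq_sum {f : ℂ → ℂ} {t : ℝ} (Z : Finset ℂ)
    (hZ : ∀ z ∈ ball (0 : ℂ) t, zeroMult f z ≠ 0 → z ∈ Z) :
    zeroCount f t = ∑ z ∈ Z with ‖z‖ < t, (zeroMult f z : ℝ) := by
  set S := {z : ℂ | z ∈ ball (0 : ℂ) t ∧ f z = 0}
  have hout : ∀ z ∉ Z, S.indicator (fun z => (zeroMult f z : ℝ)) z = 0 := by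
    intro z hz
    by_cases hS : z ∈ S
    · simp [indicator_of_mem hS, not_imp_comm.1 (hZ z hS.1) hz]
    · exact indicator_of_notMem hS _
  change ∑' z : S, (zeroMult f z : ℝ) = _
  rw [tsum_subtype S (fun z => (zeroMult f z : ℝ)), tsum_eq_sum hout, Finset.sum_filter]
  refine Finset.sum_congr rfl fun z _ => ?_
  by_cases hfz : f z = 0
  · simp [S, indicator, hfz]
  · simp [zeroMult_eq_zero_of_ne_zero hfz]

lemma Ioc_inter_Ioi_of_pos {a R : ℝ} (ha : 0 < a) : Ioc 0 R ∩ Ioi a = Ioc a R := by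
  rw [Ioc_inter_Ioi, sup_eq_right.2 ha.le]

lemma integrableOn_indicator_Ioi_inv {a : ℝ} (ha : 0 < a) (R : ℝ) :
    IntegrableOn ((Ioi a).indicator fun t => t⁻¹) (Ioc 0 R) := by
  rw [integrableOn_indicator_iff measurableSet_Ioi, inter_comm, Ioc_inter_Ioi_of_pos ha]
  exact (continuousOn_inv₀.mono fun t ht => (ha.trans_le ht.1).ne').integrableOn_Icc.mono_set
    Ioc_subset_Icc_self

lemma intervalIntegral_indicator_Ioi_inv {a R : ℝ} (ha : 0 < a) (haR : a ≤ R) :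
    ∫ t in (0 : ℝ)..R, (Ioi a).indicator (fun t => t⁻¹) t = log (R / a) := by
  rw [intervalIntegral.integral_of_le (ha.le.trans haR), integral_indicator measurableSet_Ioi,
    Measure.restrict_restrict measurableSet_Ioi, inter_comm, Ioc_inter_Ioi_of_pos ha,
    ← intervalIntegral.integral_of_le haR, integral_inv_of_pos ha (ha.trans_le haR)]

lemma intervalIntegral_sum_filter_lt_div {ι : Type*} (s : Finset ι) (r m : ι → ℝ) {R : ℝ}
    (hr : ∀ i ∈ s, 0 < r i ∧ r i ≤ R) :
    ∫ t in (0 : ℝ)..R, (∑ i ∈ s with r i < t, m i) / t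
      = ∑ i ∈ s, m i * log (R / r i) := by
  have hsum : ∀ t, (∑ i ∈ s with r i < t, m i) / t
      = ∑ i ∈ s, m i * (Ioi (r i)).indicator (fun t => t⁻¹) t := by
    intro t
    rw [Finset.sum_filter, Finset.sum_div]
    refine Finset.sum_congr rfl fun i _ => ?_
    by_cases h : r i < t <;> simp [h, div_eq_mul_inv]
  simp_rw [hsum]
  rw [intervalIntegral.integral_finsetSum]
  · refine Finset.sum_congr rfl fun i hi => ?_
    rw [intervalIntegral.integral_const_mul,
      intervalIntegral_indicator_Ioi_inv (hr i hi).1 (hr i hi).2]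
  · intro i hi
    refine IntervalIntegrable.const_mul ?_ _
    rw [intervalIntegrable_iff_integrableOn_Ioc_of_le ((hr i hi).1.le.trans (hr i hi).2)]
    exact integrableOn_indicator_Ioi_inv (hr i hi).1 R

lemma IsCompact.bddAbove_log_norm_image {f : ℂ → ℂ} {K : Set ℂ} (hK : IsCompact K)
    (hf : ContinuousOn f K) : BddAbove ((fun z => log ‖f z‖) '' K) := by
  obtain ⟨M, hM⟩ := hK.bddAbove_image hf.norm
  refine ⟨M, ?_⟩
  rintro _ ⟨z, hz, rfl⟩
  exact (log_le_self (norm_nonneg _)).trans (hM ⟨z, hz, rfl⟩)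

lemma circleAverage_le_sSup_image {g : ℂ → ℝ} {c : ℂ} {R : ℝ}
    (hg : CircleIntegrable g c R) (hbdd : BddAbove (g '' sphere c |R|)) :
    circleAverage g c R ≤ sSup (g '' sphere c |R|) :=
  circleAverage_mono_on_of_le_circle hg fun z hz => le_csSup hbdd ⟨z, hz, rfl⟩

theorem AnalyticOnNhd.regZeroCount_eq_circleAverage_sub {f : ℂ → ℂ} {R : ℝ} (hR : 0 < R)
    (hf : AnalyticOnNhd ℂ f (closedBall 0 R)) (hf0 : f 0 ≠ 0) :
    regZeroCount f R = circleAverage (Real.log ‖f ·‖) 0 R - Real.log ‖f 0‖ := by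
  set D := divisor f (closedBall 0 R)
  have hD : ∀ z ∈ closedBall (0 : ℂ) R, D z = zeroMult f z := by
    intro z hz
    rw [hf.divisor_eq_analyticOrderNatAt hz, zeroMult_eq_analyticOrderNatAt]
  have hDfin : D.support.Finite := D.finiteSupport (isCompact_closedBall 0 R)
  set Z := hDfin.toFinset
  have hZ : ∀ z ∈ Z, 0 < ‖z‖ ∧ ‖z‖ ≤ R := by
    intro z hz
    rw [Finite.mem_toFinset] at hz
    have hzR : z ∈ closedBall (0 : ℂ) R := D.supportWithinDomain hz
    refine ⟨norm_pos_iff.2 ?_, mem_closedBall_zero_iff.1 hzR⟩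
    rintro rfl
    simp [Function.mem_support, hD 0 hzR, zeroMult_eq_zero_of_ne_zero hf0] at hz
  have hcount : ∀ t ∈ uIcc 0 R,
      zeroCount f t / t = (∑ z ∈ Z with ‖z‖ < t, (zeroMult f z : ℝ)) / t := by
    intro t ht
    rw [uIcc_of_le hR.le] at ht
    rw [zeroCount_eq_sum Z fun z hz hmult => ?_]
    have hzR : z ∈ closedBall (0 : ℂ) R := ball_subset_closedBall (ball_subset_ball ht.2 hz)
    rw [Finite.mem_toFinset, Function.mem_support, hD z hzR]
    exact_mod_cast hmult
  have hsupp : (Function.support fun u => (D u : ℝ) * Real.log (R * ‖0 - u‖⁻¹)) ⊆ Z :=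
    fun u hu => by simpa [Z] using Function.support_mul_subset_left _ _ hu
  rw [AnalyticOnNhd.circleAverage_log_norm hR.ne' (by rwa [abs_of_pos hR]) hf0, abs_of_pos hR,
    add_sub_cancel_right, finsum_eq_sum_of_support_subset _ hsupp, regZeroCount,
    intervalIntegral.integral_congr hcount,
    intervalIntegral_sum_filter_lt_div Z _ _ hZ]
  refine Finset.sum_congr rfl fun z hz => ?_
  rw [hD z (by simpa using (hZ z hz).2), Int.cast_natCast, zero_sub, norm_neg, div_eq_mul_inv]

/-- Jensen's inequality: if f is holomorphic on a neighborhood of the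
closed disk of radius R with f(0) = 1, then N_f(R) ≤ max_{|λ|=R} ln|f(λ)|. -/
theorem stmt_11 (f : ℂ → ℂ) (R : ℝ) (hR : 0 < R) (U : Set ℂ) (hU : IsOpen U)
    (hsub : Metric.closedBall (0 : ℂ) R ⊆ U) (hf : DifferentiableOn ℂ f U)
    (hf0 : f 0 = 1) :
    regZeroCount f R ≤
      sSup ((fun z : ℂ => Real.log ‖f z‖) '' Metric.sphere (0 : ℂ) R) := by
  have hA : AnalyticOnNhd ℂ f (closedBall 0 R) := (hf.analyticOnNhd hU).mono hsub
  have hsphere : AnalyticOnNhd ℂ f (sphere 0 |R|) := hA.mono <| by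
    rw [abs_of_pos hR]; exact sphere_subset_closedBall
  rw [hA.regZeroCount_eq_circleAverage_sub hR (by simp [hf0]), hf0, norm_one, log_one, sub_zero]
  simpa only [abs_of_pos hR] using
    circleAverage_le_sSup_image hsphere.meromorphicOn.circleIntegrable_log_norm
      ((isCompact_sphere 0 |R|).bddAbove_log_norm_image hsphere.continuousOn)
end

section
/- Let α be a multi-index in ℕ_0^d and r ∈ {1,...,|α|}. Then r!·∑_{p(α,r)} ∏_{j=1}^{|α|} 1/k_j! = C(|α|-1, r-1), where the sum is over all tuples (k_1,...,k_{|α|}; λ_1,...,λ_{|α|}) with k_i ∈ ℕ_0, λ_i ∈ ℕ_0^d nonzero and distinct in the appropriate ordering, satisfying ∑ k_i = r and ∑ k_i λ_i = α — and consequently ∑_{r=1}^{|α|} r!·∑_{p(α,r)} ∏_j 1/k_j! = 2^{|α|-1}. -/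
/-- The Faà di Bruno index set p(α,r), encoded as the set of multisets of nonzero parts
(the distinct parts λ_j with multiplicities k_j) of size r summing to |α| = n. -/
def faaDiBrunoSet (n r : ℕ) : Set (Multiset ℕ) :=
  {m : Multiset ℕ | m.card = r ∧ m.sum = n ∧ 0 ∉ m}

/-- The sum ∑_{p(α,r)} r!·∏_j 1/k_j!, where the k_j are the multiplicities. -/
noncomputable def faaDiBrunoSum (n r : ℕ) : ℝ :=
  ∑' m : faaDiBrunoSet n r,
    (r.factorial : ℝ) *
      ∏ a ∈ (m : Multiset ℕ).toFinset, (1 / (((m : Multiset ℕ).count a).factorial : ℝ))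

/-!
Writing a multiset `m` of positive parts for the distinct parts `λ_j` with multiplicities `k_j`,
the weight `r! ∏ 1/k_j!` is the number of distinct orderings of `m`, so the sum over `p(α, r)`
counts compositions of `|α|` into `r` positive parts, of which there are `C(|α| - 1, r - 1)`.
Formally, sorting the orderings by their first part gives `W(m) = ∑ₐ W(m - a)`, hence
`S(n, r + 1) = ∑_{k < n} S(k, r)`, and the hockey-stick identity closes an induction on `r`.
-/

open Finset Nat

namespace Multiset

variable {α : Type*} [DecidableEq α]

/-- The number of distinct orderings of `m`. -/
noncomputable def permWeight (m : Multiset α) : ℝ :=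
  (m.card ! : ℝ) * ∏ a ∈ m.toFinset, 1 / ((m.count a)! : ℝ)

lemma prod_inv_factorial_count_erase {m : Multiset α} {a : α} {s : Finset α}
    (ha : a ∈ m) (hs : m.toFinset ⊆ s) :
    ∏ b ∈ s, 1 / (((m.erase a).count b)! : ℝ) =
      m.count a * ∏ b ∈ s, 1 / ((m.count b)! : ℝ) := by
  have has : a ∈ s := hs (mem_toFinset.2 ha)
  have hcount : m.count a ≠ 0 := count_ne_zero.2 ha
  rw [← mul_prod_erase s _ has, ← mul_prod_erase s _ has, ← mul_assoc,
    prod_congr rfl fun b hb => by rw [count_erase_of_ne (ne_of_mem_erase hb)],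
    count_erase_self, ← Nat.mul_factorial_pred hcount]
  push_cast
  field_simp

lemma prod_inv_factorial_count_of_toFinset_subset {m : Multiset α} {s : Finset α}
    (hs : m.toFinset ⊆ s) :
    ∏ b ∈ s, 1 / ((m.count b)! : ℝ) = ∏ b ∈ m.toFinset, 1 / ((m.count b)! : ℝ) :=
  (prod_subset hs fun b _ hb => by
    rw [count_eq_zero.2 fun h => hb (mem_toFinset.2 h)]; simp).symm

lemma permWeight_erase {m : Multiset α} {a : α} (ha : a ∈ m) :
    permWeight (m.erase a) =
      m.count a * ((m.card - 1)! * ∏ b ∈ m.toFinset, 1 / ((m.count b)! : ℝ)) := by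
  have hsub : (m.erase a).toFinset ⊆ m.toFinset := toFinset_subset.2 (erase_subset a m)
  rw [permWeight, card_erase_of_mem ha, Nat.pred_eq_sub_one,
    ← prod_inv_factorial_count_of_toFinset_subset hsub,
    prod_inv_factorial_count_erase ha subset_rfl]
  ring

/-- Classify the orderings of `m` by their first element. -/
theorem permWeight_eq_sum_erase {m : Multiset α} (hm : m ≠ 0) :
    permWeight m = ∑ a ∈ m.toFinset, permWeight (m.erase a) := by
  rw [sum_congr rfl fun a ha => permWeight_erase (mem_toFinset.1 ha), ← sum_mul,
    ← Nat.cast_sum, toFinset_sum_count_eq, ← mul_assoc, ← Nat.cast_mul,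
    Nat.mul_factorial_pred (card_pos.2 hm).ne', permWeight]

@[simp]
lemma permWeight_singleton (a : α) : permWeight ({a} : Multiset α) = 1 := by
  simp [permWeight]

end Multiset

def faaDiBrunoFinset (n r : ℕ) : Finset (Multiset ℕ) :=
  {m ∈ (univ : Finset n.Partition).image Nat.Partition.parts | m.card = r}

lemma mem_faaDiBrunoFinset {n r : ℕ} {m : Multiset ℕ} :
    m ∈ faaDiBrunoFinset n r ↔ m ∈ faaDiBrunoSet n r := by
  simp only [faaDiBrunoFinset, faaDiBrunoSet, mem_filter, mem_image, mem_univ, true_and,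
    Set.mem_ofPred_eq]
  constructor
  · rintro ⟨⟨p, rfl⟩, hr⟩
    exact ⟨hr, p.parts_sum, fun h0 => (p.parts_pos h0).ne rfl⟩
  · rintro ⟨hr, hn, h0⟩
    exact ⟨⟨⟨m, fun hi => Nat.pos_of_ne_zero fun e => h0 (e ▸ hi), hn⟩, rfl⟩, hr⟩

lemma card_le_sum_of_zero_notMem {m : Multiset ℕ} (h : 0 ∉ m) : m.card ≤ m.sum := by
  simpa using
    Multiset.card_nsmul_le_sum fun x hx => Nat.one_le_iff_ne_zero.2 fun e => h (e ▸ hx)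

lemma faaDiBrunoFinset_eq_empty {n r : ℕ} (h : n < r) : faaDiBrunoFinset n r = ∅ :=
  eq_empty_of_forall_notMem fun _ hm =>
    have ⟨hr, hn, h0⟩ := mem_faaDiBrunoFinset.1 hm
    h.not_ge (hr ▸ hn ▸ card_le_sum_of_zero_notMem h0)

lemma faaDiBrunoFinset_one (n : ℕ) : faaDiBrunoFinset (n + 1) 1 = {{n + 1}} := by
  ext m
  simp only [mem_faaDiBrunoFinset, faaDiBrunoSet, Set.mem_ofPred_eq, mem_singleton,
    Multiset.card_eq_one]
  constructor
  · rintro ⟨⟨a, rfl⟩, hn, -⟩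
    simpa using hn
  · rintro rfl
    simp

lemma faaDiBrunoSum_eq_sum (n r : ℕ) :
    faaDiBrunoSum n r = ∑ m ∈ faaDiBrunoFinset n r, m.permWeight := by
  have hset : faaDiBrunoSet n r = ↑(faaDiBrunoFinset n r) := by
    ext; exact mem_faaDiBrunoFinset.symm
  rw [faaDiBrunoSum, hset, ← Finset.tsum_subtype']
  refine tsum_congr fun m => ?_
  rw [Multiset.permWeight, (mem_faaDiBrunoFinset.1 m.2).1]

lemma cons_mem_faaDiBrunoFinset_succ {n r a : ℕ} {m : Multiset ℕ} :
    a ::ₘ m ∈ faaDiBrunoFinset n (r + 1) ↔ 0 < a ∧ a ≤ n ∧ m ∈ faaDiBrunoFinset (n - a) r := by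
  simp only [mem_faaDiBrunoFinset, faaDiBrunoSet, Set.mem_ofPred_eq, Multiset.card_cons,
    Multiset.sum_cons, Multiset.mem_cons, not_or]
  grind

/-- Removing one part `a` of a partition of `n` into `r + 1` parts leaves one of `n - a`
into `r` parts. -/
lemma sum_permWeight_faaDiBrunoFinset_succ (n r : ℕ) :
    ∑ m ∈ faaDiBrunoFinset n (r + 1), m.permWeight =
      ∑ k ∈ range n, ∑ m ∈ faaDiBrunoFinset k r, m.permWeight := by
  have hne : ∀ m ∈ faaDiBrunoFinset n (r + 1), m ≠ 0 := by
    rintro _ hm rfl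
    simp [mem_faaDiBrunoFinset, faaDiBrunoSet] at hm
  have hcons : ∀ m ∈ faaDiBrunoFinset n (r + 1), ∀ a ∈ m,
      0 < a ∧ a ≤ n ∧ m.erase a ∈ faaDiBrunoFinset (n - a) r := fun m hm a ha =>
    cons_mem_faaDiBrunoFinset_succ.1 <| by rwa [Multiset.cons_erase ha]
  rw [sum_congr rfl fun m hm => Multiset.permWeight_eq_sum_erase (hne m hm), sum_sigma',
    sum_sigma']
  refine sum_nbij' (fun x => ⟨n - x.2, x.1.erase x.2⟩) (fun y => ⟨(n - y.1) ::ₘ y.2, n - y.1⟩)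
    ?_ ?_ ?_ ?_ fun _ _ => rfl
  · rintro ⟨m, a⟩ hx
    simp only [Finset.mem_sigma, Multiset.mem_toFinset, mem_range] at hx ⊢
    obtain ⟨ha, han, herase⟩ := hcons m hx.1 a hx.2
    exact ⟨by omega, herase⟩
  · rintro ⟨k, m⟩ hy
    simp only [Finset.mem_sigma, Multiset.mem_toFinset, mem_range] at hy ⊢
    refine ⟨cons_mem_faaDiBrunoFinset_succ.2 ⟨by omega, by omega, ?_⟩, Multiset.mem_cons_self _ _⟩
    rw [Nat.sub_sub_self hy.1.le]
    exact hy.2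
  · rintro ⟨m, a⟩ hx
    simp only [Finset.mem_sigma, Multiset.mem_toFinset] at hx
    simp [Nat.sub_sub_self (hcons m hx.1 a hx.2).2.1, Multiset.cons_erase hx.2]
  · rintro ⟨k, m⟩ hy
    simp only [Finset.mem_sigma, mem_range] at hy
    simp [Nat.sub_sub_self hy.1.le]

lemma sum_range_choose_eq_choose_succ (N j : ℕ) :
    ∑ k ∈ range N, k.choose j = N.choose (j + 1) := by
  induction N with
  | zero => simp
  | succ N ih => rw [sum_range_succ, ih, Nat.choose_succ_succ', add_comm]

theorem sum_permWeight_faaDiBrunoFinset (n r : ℕ) :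
    ∑ m ∈ faaDiBrunoFinset (n + 1) (r + 1), m.permWeight = n.choose r := by
  induction r generalizing n with
  | zero => simp [faaDiBrunoFinset_one]
  | succ r ih =>
    rw [sum_permWeight_faaDiBrunoFinset_succ, sum_range_succ', faaDiBrunoFinset_eq_empty r.succ_pos,
      sum_empty, add_zero]
    simp only [ih, ← Nat.cast_sum, sum_range_choose_eq_choose_succ]

/-- r!·∑_{p(α,r)} ∏_j 1/k_j! = C(|α|-1, r-1), and consequently
∑_{r=1}^{|α|} r!·∑_{p(α,r)} ∏_j 1/k_j! = 2^{|α|-1}. -/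
theorem stmt_15 (n : ℕ) (hn : 1 ≤ n) :
    (∀ r : ℕ, 1 ≤ r → r ≤ n → faaDiBrunoSum n r = (Nat.choose (n - 1) (r - 1) : ℝ)) ∧
    (∑ r ∈ Finset.Icc 1 n, faaDiBrunoSum n r) = (2 : ℝ) ^ (n - 1) := by
  obtain ⟨N, rfl⟩ := Nat.exists_eq_add_of_le' hn
  have hchoose (r : ℕ) (hr : 1 ≤ r) : faaDiBrunoSum (N + 1) r = (N.choose (r - 1) : ℝ) := by
    obtain ⟨R, rfl⟩ := Nat.exists_eq_add_of_le' hr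
    rw [faaDiBrunoSum_eq_sum, sum_permWeight_faaDiBrunoFinset, Nat.add_sub_cancel]
  refine ⟨fun r hr _ => hchoose r hr, ?_⟩
  rw [sum_congr rfl fun r hr => hchoose r (mem_Icc.1 hr).1, ← Ico_add_one_right_eq_Icc,
    sum_Ico_eq_sum_range]
  simp only [add_tsub_cancel_right, add_tsub_cancel_left, ← Nat.cast_sum, Nat.sum_range_choose,
    Nat.cast_pow, Nat.cast_ofNat]
end
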